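/- Under the standing hypotheses and the KL-setup data, with Ξ_k := √(R_k − R_{k+1}) and e := (1/α)·√(p_min σ a / τ_max), for all sufficiently large k with x^k ∈ C one has e·‖x^{k+1} − x^k‖ ≤ Ξ_k. -/

import Mathlib

open Set Filter Topology

noncomputable section

variable {E : Type*} [NormedAddCommGroup E] [InnerProductSpace ℝ E] [FiniteDimensional ℝ E]

open Classical in
/-- The indicator function of a set `M` (`0` on `M`, `+∞` elsewhere), with values in `EReal`. -/
def indicatorFun (M : Set E) (x : E) : EReal := if x ∈ M then 0 else ⊤

/-- The Fréchet (regular) subdifferential of an extended-real-valued function `g` at `x`. -/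
def frechetSubdiff (g : E → EReal) (x : E) : Set E :=
  {v | ∀ ε : ℝ, 0 < ε →
    ∀ᶠ y in 𝓝 x, g x + (((inner ℝ v (y - x) : ℝ) - ε * ‖y - x‖ : ℝ) : EReal) ≤ g y}

/-- The limiting (Mordukhovich) subdifferential of `g` at `x`. -/
def limitingSubdiff (g : E → EReal) (x : E) : Set E :=
  {v | ∃ xs vs : ℕ → E,
    Tendsto xs atTop (𝓝 x) ∧
    Tendsto (fun n => g (xs n)) atTop (𝓝 (g x)) ∧
    (∀ n, vs n ∈ frechetSubdiff g (xs n)) ∧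
    Tendsto vs atTop (𝓝 v)}

/-- The projectional limiting subdifferential of `g` at `x` relative to `M`:
the orthogonal projection onto the tangent space `T x` of the limiting
subdifferential of `g + δ_M` at `x`. -/
def projSubdiff (g : E → ℝ) (M : Set E) (T : E → Submodule ℝ E) (x : E) : Set E :=
  (fun v => (((T x).orthogonalProjectionOnto v : T x) : E)) ''
    limitingSubdiff (fun y => (g y : EReal) + indicatorFun M y) x

/-- `M ⊆ E` is a smooth embedded submanifold with tangent spaces `T x`: around each
point of `M` there is a `C¹` local defining function with surjective derivative at
that point, and on `M` the tangent space is the kernel of the derivative. -/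
def IsSubmanifold (M : Set E) (T : E → Submodule ℝ E) : Prop :=
  ∀ x ∈ M, ∃ (m : ℕ) (U : Set E) (F : E → (Fin m → ℝ)),
    IsOpen U ∧ x ∈ U ∧ ContDiffOn ℝ 1 F U ∧
    Function.Surjective ⇑(fderiv ℝ F x) ∧
    M ∩ U = {y ∈ U | F y = 0} ∧
    ∀ y ∈ M ∩ U, T y = LinearMap.ker (fderiv ℝ F y : E →ₗ[ℝ] (Fin m → ℝ))

/-- A retraction on the submanifold `M` with tangent spaces `T`: a `C²` map on the
tangent bundle with values in `M` such that `R_x(0) = x` and `DR_x(0) = id`. -/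
structure Retraction (M : Set E) (T : E → Submodule ℝ E) where
  R : E → E → E
  mem_target : ∀ x ∈ M, ∀ ξ ∈ T x, R x ξ ∈ M
  map_zero : ∀ x ∈ M, R x 0 = x
  smooth : ContDiffOn ℝ 2 (fun p : E × E => R p.1 p.2) {p : E × E | p.1 ∈ M ∧ p.2 ∈ T p.1}
  deriv_id : ∀ x ∈ M, ∀ ξ ∈ T x, HasDerivAt (fun t : ℝ => R x (t • ξ)) ξ 0

/-- Assumption A1: a local nonsmooth descent property of `φ` along the retraction,
together with local boundedness of the projectional subdifferential on `M`. -/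
def AssumptionA1 (M : Set E) (T : E → Submodule ℝ E) (Ret : Retraction M T) (φ : E → ℝ) : Prop :=
  (∀ z ∈ M, ∃ κ > (0:ℝ), ∃ r > (0:ℝ), ∃ O : Set E, IsOpen O ∧ z ∈ O ∧
    ∀ x ∈ M ∩ O, ∀ ξ ∈ T x, ‖ξ‖ ≤ r → ∀ w ∈ projSubdiff φ M T x,
      φ (Ret.R x ξ) - (φ x + (inner ℝ w ξ : ℝ)) ≤ κ * ‖ξ‖ ^ 2) ∧
  (∀ z ∈ M, ∃ ρ > (0:ℝ), ∃ c : ℝ, ∀ x ∈ M, ‖x - z‖ < ρ →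
    ∀ w ∈ projSubdiff φ M T x, ‖w‖ ≤ c)

/-- A run of the nonmonotone subgradient method on the manifold `M`:
subgradients `w k`, directions `d k`, stepsizes `τ k` obtained by backtracking
from initial trial stepsizes `τhat k` (with `j k` backtracking steps), iterates
`x k` and reference values `Rv k` updated by the mean-rule with weights `p k`. -/
structure AlgSeq (M : Set E) (T : E → Submodule ℝ E) (Ret : Retraction M T) (φ : E → ℝ)
    (σ β τmin τmax pmin a b : ℝ) where
  x : ℕ → E
  w : ℕ → E
  d : ℕ → E
  τhat : ℕ → ℝ
  j : ℕ → ℕ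
  τ : ℕ → ℝ
  p : ℕ → ℝ
  Rv : ℕ → ℝ
  x_mem : ∀ k, x k ∈ M
  w_mem : ∀ k, w k ∈ projSubdiff φ M T (x k)
  w_ne : ∀ k, w k ≠ 0
  d_mem : ∀ k, d k ∈ T (x k)
  d_ne : ∀ k, d k ≠ 0
  descent : ∀ k, (inner ℝ (w k) (d k) : ℝ) ≤ -a * ‖d k‖ ^ 2
  dir_bound : ∀ k, ‖w k‖ ≤ b * ‖d k‖
  τhat_mem : ∀ k, τhat k ∈ Set.Icc τmin τmax
  τ_def : ∀ k, τ k = β ^ (j k) * τhat k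
  j_least : ∀ k, IsLeast {i : ℕ |
      φ (Ret.R (x k) ((β ^ i * τhat k) • d k)) ≤
        Rv k + σ * (β ^ i * τhat k) * (inner ℝ (w k) (d k) : ℝ)} (j k)
  x_succ : ∀ k, x (k + 1) = Ret.R (x k) (τ k • d k)
  p_mem : ∀ k, p (k + 1) ∈ Set.Icc pmin 1
  R_zero : Rv 0 = φ (x 0)
  R_succ : ∀ k, Rv (k + 1) = (1 - p (k + 1)) * Rv k + p (k + 1) * φ (x (k + 1))

/-!
The Armijo condition and the mean rule make the reference values decrease by at least
`(pmin σ a / τmax) ‖τ_k d^k‖²` per step. Being bounded below by `inf φ`, they converge, so these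
decrements tend to `0`; hence the tangent steps `τ_k d^k` eventually lie in the ball of radius `r`,
where the retraction moves points by at most `α ‖τ_k d^k‖`.
-/

theorem Antitone.tendsto_sub_succ {u : ℕ → ℝ} (hu : Antitone u) (hbdd : BddBelow (range u)) :
    Tendsto (fun k => u k - u (k + 1)) atTop (𝓝 0) := by
  have hlim := tendsto_atTop_ciInf hu hbdd
  simpa using hlim.sub (hlim.comp (tendsto_add_atTop_nat 1))

theorem tendsto_zero_of_mul_sq_norm_le {ι F : Type*} [SeminormedAddCommGroup F] {l : Filter ι}
    {f : ι → F} {D : ι → ℝ} {c : ℝ} (hc : 0 < c) (hf : ∀ i, c * ‖f i‖ ^ 2 ≤ D i)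
    (hD : Tendsto D l (𝓝 0)) : Tendsto f l (𝓝 0) := by
  refine squeeze_zero_norm (a := fun i => √(D i / c)) (fun i => ?_) ?_
  · rw [← Real.sqrt_sq (norm_nonneg (f i))]
    exact Real.sqrt_le_sqrt ((le_div_iff₀' hc).2 (hf i))
  · simpa using (hD.div_const c).sqrt

theorem one_div_mul_sqrt_mul_le {α c s t D : ℝ} (hα : 0 < α) (hc : 0 ≤ c) (hs : 0 ≤ s)
    (ht : t ≤ α * s) (hD : c * s ^ 2 ≤ D) : 1 / α * √c * t ≤ √D :=
  calc 1 / α * √c * t = √c * (t / α) := by ring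
    _ ≤ √c * s := by gcongr; exact (div_le_iff₀' hα).2 ht
    _ = √(c * s ^ 2) := by rw [Real.sqrt_mul hc, Real.sqrt_sq hs]
    _ ≤ √D := Real.sqrt_le_sqrt hD

namespace AlgSeq

variable {M : Set E} {T : E → Submodule ℝ E} {Ret : Retraction M T} {φ : E → ℝ}
  {σ β τmin τmax pmin a b : ℝ} (A : AlgSeq M T Ret φ σ β τmin τmax pmin a b)

theorem τ_nonneg (hβ : 0 ≤ β) (hτmin : 0 ≤ τmin) (k : ℕ) : 0 ≤ A.τ k := by
  rw [A.τ_def k]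
  exact mul_nonneg (pow_nonneg hβ _) (hτmin.trans (A.τhat_mem k).1)

theorem τ_le (hβ₀ : 0 ≤ β) (hβ₁ : β ≤ 1) (hτmin : 0 ≤ τmin) (k : ℕ) : A.τ k ≤ τmax := by
  rw [A.τ_def k]
  calc β ^ A.j k * A.τhat k ≤ 1 * A.τhat k := by
        gcongr
        · exact hτmin.trans (A.τhat_mem k).1
        · exact pow_le_one₀ hβ₀ hβ₁
    _ ≤ τmax := by simpa using (A.τhat_mem k).2

theorem φ_succ_le (k : ℕ) :
    φ (A.x (k + 1)) ≤ A.Rv k + σ * A.τ k * (inner ℝ (A.w k) (A.d k) : ℝ) := by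
  rw [A.x_succ k, A.τ_def k]
  exact (A.j_least k).1

theorem mul_sq_norm_le_Rv_sub_succ (hσ : 0 ≤ σ) (ha : 0 ≤ a) (hpmin : 0 ≤ pmin) (k : ℕ)
    (hτ : 0 ≤ A.τ k) : pmin * σ * a * (A.τ k * ‖A.d k‖ ^ 2) ≤ A.Rv k - A.Rv (k + 1) := by
  have hgain : σ * A.τ k * a * ‖A.d k‖ ^ 2 ≤ A.Rv k - φ (A.x (k + 1)) := by
    have := mul_le_mul_of_nonneg_left (A.descent k) (mul_nonneg hσ hτ)
    linarith [A.φ_succ_le k]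
  have hp := A.p_mem k
  have hRv : A.Rv k - A.Rv (k + 1) = A.p (k + 1) * (A.Rv k - φ (A.x (k + 1))) := by
    rw [A.R_succ k]; ring
  have hgain₀ : 0 ≤ σ * A.τ k * a * ‖A.d k‖ ^ 2 := by positivity
  rw [hRv]
  calc pmin * σ * a * (A.τ k * ‖A.d k‖ ^ 2) = pmin * (σ * A.τ k * a * ‖A.d k‖ ^ 2) := by ring
    _ ≤ A.p (k + 1) * (A.Rv k - φ (A.x (k + 1))) :=
        mul_le_mul hp.1 hgain hgain₀ (hpmin.trans hp.1)

theorem antitone_Rv (hσ : 0 ≤ σ) (ha : 0 ≤ a) (hpmin : 0 ≤ pmin) (hτ : ∀ k, 0 ≤ A.τ k) :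
    Antitone A.Rv :=
  antitone_nat_of_succ_le fun k => by
    have := A.mul_sq_norm_le_Rv_sub_succ hσ ha hpmin k (hτ k)
    have : 0 ≤ pmin * σ * a * (A.τ k * ‖A.d k‖ ^ 2) := by have := hτ k; positivity
    linarith

theorem bddBelow_range_Rv (hφ : BddBelow (φ '' M)) (hpmin : 0 ≤ pmin) :
    BddBelow (range A.Rv) := by
  obtain ⟨m, hm⟩ := hφ
  have hφm : ∀ k, m ≤ φ (A.x k) := fun k => hm ⟨_, A.x_mem k, rfl⟩
  refine ⟨m, forall_mem_range.2 fun k => ?_⟩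
  induction k with
  | zero => exact A.R_zero ▸ hφm 0
  | succ k ih =>
    have hp := A.p_mem k
    rw [A.R_succ k]
    nlinarith [hφm (k + 1), mul_le_mul_of_nonneg_left ih (sub_nonneg.2 hp.2),
      mul_le_mul_of_nonneg_left (hφm (k + 1)) (hpmin.trans hp.1)]

theorem step_sq_le_Rv_sub_succ (hσ : 0 ≤ σ) (hβ₀ : 0 ≤ β) (hβ₁ : β ≤ 1) (hτmin : 0 ≤ τmin)
    (hτmax : 0 < τmax) (ha : 0 ≤ a) (hpmin : 0 ≤ pmin) (k : ℕ) :
    pmin * σ * a / τmax * ‖A.τ k • A.d k‖ ^ 2 ≤ A.Rv k - A.Rv (k + 1) := by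
  have hτ := A.τ_nonneg hβ₀ hτmin k
  refine le_trans ?_ (A.mul_sq_norm_le_Rv_sub_succ hσ ha hpmin k hτ)
  rw [norm_smul, Real.norm_of_nonneg hτ, div_mul_eq_mul_div, div_le_iff₀ hτmax]
  have : A.τ k * (A.τ k * ‖A.d k‖ ^ 2) ≤ τmax * (A.τ k * ‖A.d k‖ ^ 2) := by
    gcongr; exact A.τ_le hβ₀ hβ₁ hτmin k
  have hc : 0 ≤ pmin * σ * a := by positivity
  nlinarith [mul_le_mul_of_nonneg_left this hc]

end AlgSeq

theorem stmt13_general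
    (M : Set E) (T : E → Submodule ℝ E) (Ret : Retraction M T) (φ : E → ℝ)
    (σ β τmin τmax pmin a b : ℝ)
    (hσ : σ ∈ Set.Ioo (0:ℝ) 1) (hβ : β ∈ Set.Ioo (0:ℝ) 1)
    (hτmin : 0 < τmin) (hττ : τmin ≤ τmax)
    (hpmin : pmin ∈ Set.Ioc (0:ℝ) 1) (ha : 0 < a)
    (hφbdd : BddBelow (φ '' M))
    (A : AlgSeq M T Ret φ σ β τmin τmax pmin a b)
    (C : Set E)
    (α r : ℝ) (hα : 0 < α) (hr : 0 < r)
    (hretr : ∀ x ∈ C, ∀ ξ ∈ T x, ‖ξ‖ ≤ r → ‖Ret.R x ξ - x‖ ≤ α * ‖ξ‖)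
    :
    ∃ N : ℕ, ∀ k ≥ N, A.x k ∈ C →
      (1 / α) * Real.sqrt (pmin * σ * a / τmax) * ‖A.x (k + 1) - A.x k‖ ≤
        Real.sqrt (A.Rv k - A.Rv (k + 1)) := by
  have hτmax : 0 < τmax := hτmin.trans_le hττ
  have hc : 0 < pmin * σ * a / τmax := by
    have := hpmin.1; have := hσ.1; positivity
  have hdecrease :=
    A.step_sq_le_Rv_sub_succ hσ.1.le hβ.1.le hβ.2.le hτmin.le hτmax ha.le hpmin.1.le
  have hdrop :=
    (A.antitone_Rv hσ.1.le ha.le hpmin.1.le (A.τ_nonneg hβ.1.le hτmin.le)).tendsto_sub_succ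
      (A.bddBelow_range_Rv hφbdd hpmin.1.le)
  have hsmall := (tendsto_zero_of_mul_sq_norm_le hc hdecrease hdrop).eventually
    (Metric.closedBall_mem_nhds 0 hr)
  obtain ⟨N, hN⟩ := eventually_atTop.1 hsmall
  refine ⟨N, fun k hk hxk => ?_⟩
  have hΔ : ‖A.x (k + 1) - A.x k‖ ≤ α * ‖A.τ k • A.d k‖ := by
    rw [A.x_succ k]
    exact hretr _ hxk _ (Submodule.smul_mem _ _ (A.d_mem k))
      (mem_closedBall_zero_iff.1 (hN k hk))
  exact one_div_mul_sqrt_mul_le hα hc.le (norm_nonneg _) hΔ (hdecrease k)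

/-- With `Ξ_k := √(R_k - R_{k+1})` and `e := (1/α)√(pmin σ a / τmax)`, the step
lengths are bounded by `e ‖x^{k+1} - x^k‖ ≤ Ξ_k` on `C`. -/
theorem stmt13
    (M : Set E) (T : E → Submodule ℝ E) (Ret : Retraction M T) (φ : E → ℝ)
    (σ β τmin τmax pmin a b : ℝ)
    (hσ : σ ∈ Set.Ioo (0:ℝ) 1) (hβ : β ∈ Set.Ioo (0:ℝ) 1)
    (hτmin : 0 < τmin) (hττ : τmin ≤ τmax)
    (hpmin : pmin ∈ Set.Ioc (0:ℝ) 1) (ha : 0 < a) (hb : 0 < b)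
    (hM : IsSubmanifold M T)
    (hφcont : ContinuousOn φ M)
    (hφbdd : BddBelow (φ '' M))
    (hA1 : AssumptionA1 M T Ret φ)
    (A : AlgSeq M T Ret φ σ β τmin τmax pmin a b)
    (xstar : E) (ψ : ℕ → ℕ) (hψ : StrictMono ψ)
    (hacc : Tendsto (fun n => A.x (ψ n)) atTop (𝓝 xstar))
    (C : Set E) (hCM : C ⊆ M) (hCcomp : IsCompact C)
    (hCint : ∃ O : Set E, IsOpen O ∧ xstar ∈ O ∧ M ∩ O ⊆ C)
    (hCφ : ∀ y ∈ C, φ y ≤ A.Rv 0)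
    (τC : ℝ) (hτC : 0 < τC) (hτCk : ∀ k, A.x k ∈ C → τC ≤ A.τ k)
    (α r : ℝ) (hα : 0 < α) (hr : 0 < r)
    (hretr : ∀ x ∈ C, ∀ ξ ∈ T x, ‖ξ‖ ≤ r → ‖Ret.R x ξ - x‖ ≤ α * ‖ξ‖)
    :
    ∃ N : ℕ, ∀ k ≥ N, A.x k ∈ C →
      (1 / α) * Real.sqrt (pmin * σ * a / τmax) * ‖A.x (k + 1) - A.x k‖ ≤
        Real.sqrt (A.Rv k - A.Rv (k + 1)) :=
  stmt13_general M T Ret φ σ β τmin τmax pmin a b hσ hβ hτmin hττ hpmin ha hφbdd A C α r hα hr hretr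

end
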